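/- Every simple full-dimensional polytope P ⊆ ℝ^d (i.e., every vertex of P is contained in exactly d facets of P) has a vertex-facet assignment. -/

import Mathlib

/-- A polytope is the convex hull of a finite set of points. -/
def IsPolytope {V : Type*} [AddCommGroup V] [Module ℝ V] (P : Set V) : Prop :=
  ∃ S : Set V, S.Finite ∧ P = convexHull ℝ S

/-- A face of `Q` is a nonempty proper exposed face of `Q`. -/
def IsFaceOf {V : Type*} [NormedAddCommGroup V] [NormedSpace ℝ V] (Q F : Set V) : Prop :=
  IsExposed ℝ Q F ∧ F.Nonempty ∧ F ≠ Q

/-- The dimension of a set: the dimension of its affine span. -/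
noncomputable def polyDim {V : Type*} [NormedAddCommGroup V] [NormedSpace ℝ V]
    (Q : Set V) : ℕ :=
  Module.finrank ℝ (affineSpan ℝ Q).direction

/-- The facets of a full-dimensional polytope `P ⊆ V`: faces whose affine span has
dimension `dim V - 1`. -/
def ambientFacets {V : Type*} [NormedAddCommGroup V] [NormedSpace ℝ V]
    (P : Set V) : Set (Set V) :=
  {F | IsFaceOf P F ∧ polyDim F = Module.finrank ℝ V - 1}

/-- A vertex-facet assignment: an injective map from vertices (extreme points) to
non-incident facets, or an injective map from facets to non-incident vertices. -/
def HasVFA {V : Type*} [NormedAddCommGroup V] [NormedSpace ℝ V] (P : Set V) : Prop :=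
  (∃ f : (P.extremePoints ℝ) → (ambientFacets P), Function.Injective f ∧
      ∀ v, (v : V) ∉ (f v : Set V)) ∨
  (∃ g : (ambientFacets P) → (P.extremePoints ℝ), Function.Injective g ∧
      ∀ F : (ambientFacets P), (g F : V) ∉ (F : Set V))

/-!
By Hall's theorem it suffices that every set `A` of facets misses at least `#A` vertices, that is,
`#A ≤ #(V \ W)` where `W` is the set of vertices lying on every facet of `A`. If `W` is empty this
is double counting: every facet has at least `d` vertices and every vertex lies on at most `d`
facets. If `w ∈ W`, the `d` facets through `w` have independent normals: a direction `z` parallel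
to all of them keeps `w + s • z` inside `P` for small `s`, because `P` is cut out by its facet
inequalities, and `w` is a vertex. So the directions of the facets in `A` meet in a space of
dimension at most `d - #A` containing the direction of `W`, and since the vertices span `ℝ^d` the
remaining vertices must contribute at least `#A` dimensions.

That `P` is the intersection of its facet half-spaces follows by walking from an interior point to
a point outside `P`: the exit point lies on a proper face, and every proper face lies in a facet,
since a functional supporting a face of dimension `< d - 1` can be tilted until it supports a
strictly larger face.
-/

open Module Set Topology

theorem Finset.exists_pos_forall_mul_le_and_eq {α : Type*} (s : Finset α) (a b : α → ℝ)
    (ha : ∀ i ∈ s, 0 ≤ a i) (hab : ∀ i ∈ s, 0 < b i → 0 < a i) (hb : ∃ i ∈ s, 0 < b i) :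
    ∃ t > 0, (∀ i ∈ s, t * b i ≤ a i) ∧ ∃ i ∈ s, 0 < b i ∧ t * b i = a i := by
  classical
  obtain ⟨i₀, hi₀s, hi₀⟩ := hb
  obtain ⟨j, hj, hjmin⟩ := (s.filter (0 < b ·)).exists_min_image (fun i => a i / b i)
    ⟨i₀, Finset.mem_filter.2 ⟨hi₀s, hi₀⟩⟩
  rw [Finset.mem_filter] at hj
  refine ⟨a j / b j, div_pos (hab j hj.1 hj.2) hj.2, fun i hi => ?_,
    j, hj.1, hj.2, div_mul_cancel₀ _ hj.2.ne'⟩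
  rcases lt_or_ge 0 (b i) with hbi | hbi
  · exact (le_div_iff₀ hbi).1 (hjmin i (Finset.mem_filter.2 ⟨hi, hbi⟩))
  · exact (mul_nonpos_of_nonneg_of_nonpos (div_pos (hab j hj.1 hj.2) hj.2).le hbi).trans
      (ha i hi)

theorem exists_lineMap_mem_frontier {E : Type*} [AddCommGroup E] [Module ℝ E]
    [TopologicalSpace E] [IsTopologicalAddGroup E] [ContinuousSMul ℝ E] {s : Set E} {x y : E}
    (hy : y ∈ s) (hx : x ∉ s) : ∃ t ∈ Icc (0 : ℝ) 1, AffineMap.lineMap y x t ∈ frontier s := by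
  let γ : unitInterval → E := fun t => AffineMap.lineMap y x (t : ℝ)
  have hγ : Continuous γ := AffineMap.lineMap_continuous.comp continuous_subtype_val
  have h0 : γ 0 ∈ s := by simpa [γ] using hy
  have h1 : γ 1 ∉ s := by simpa [γ] using hx
  obtain ⟨t, ht⟩ := nonempty_frontier_iff (s := γ ⁻¹' s).2
    ⟨⟨0, h0⟩, (ne_univ_iff_exists_notMem _).2 ⟨1, h1⟩⟩
  exact ⟨t, t.2, hγ.frontier_preimage_subset s ht⟩

theorem eq_zero_of_eventually_add_smul_mem {E : Type*} [AddCommGroup E] [Module ℝ E]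
    {A : Set E} {w z : E} (hw : w ∈ A.extremePoints ℝ)
    (h : ∀ᶠ s in 𝓝 (0 : ℝ), w + s • z ∈ A) : z = 0 := by
  obtain ⟨ε, hε, hεA⟩ := Metric.eventually_nhds_iff.1 h
  have hmem : ∀ s : ℝ, |s| < ε → w + s • z ∈ A := fun s hs => hεA (by simpa using hs)
  have hseg : w ∈ openSegment ℝ (w + (ε / 2) • z) (w + (-(ε / 2)) • z) :=
    ⟨1 / 2, 1 / 2, by norm_num, by norm_num, by norm_num, by module⟩
  have := (hw.2 (hmem _ (by rw [abs_of_pos (by positivity)]; linarith))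
    (hmem _ (by rw [abs_neg, abs_of_pos (by positivity)]; linarith)) hseg)
  simpa [hε.ne'] using this

theorem Submodule.finrank_le_finrank_inf_add_card {K V ι : Type*} [DivisionRing K]
    [AddCommGroup V] [Module K V] [FiniteDimensional K V] (U : Submodule K V) (s : Finset ι)
    (W : ι → Submodule K V) (hW : ∀ i ∈ s, finrank K V ≤ finrank K (W i) + 1) :
    finrank K U ≤ finrank K (U ⊓ s.inf W : Submodule K V) + s.card := by
  classical
  induction s using Finset.induction_on with
  | empty =>
    rw [Finset.inf_empty, inf_top_eq]
    omega
  | insert i s hi ih =>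
    rw [Finset.inf_insert, Finset.card_insert_of_notMem hi, inf_left_comm]
    have h₁ := Submodule.finrank_sup_add_finrank_inf_eq (W i) (U ⊓ s.inf W)
    have h₂ := Submodule.finrank_le (W i ⊔ (U ⊓ s.inf W))
    have h₃ := ih fun j hj => hW j (Finset.mem_insert_of_mem hj)
    have h₄ := hW i (Finset.mem_insert_self i s)
    omega

theorem finrank_vectorSpan_union_le {k V P : Type*} [DivisionRing k] [AddCommGroup V]
    [Module k V] [AddTorsor V P] (s : Set P) {t : Set P} (ht : t.Finite) :
    finrank k (vectorSpan k (s ∪ t)) ≤ finrank k (vectorSpan k s) + t.ncard := by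
  induction t, ht using Set.Finite.induction_on with
  | empty =>
    rw [union_empty]
    omega
  | @insert a t ha ht ih =>
    rw [union_insert, Set.ncard_insert_of_notMem ha ht]
    have := finrank_vectorSpan_insert_le_set k (s ∪ t) a
    omega

section NormedSpace

variable {E : Type*} [NormedAddCommGroup E] [NormedSpace ℝ E] {P F : Set E}

theorem ContinuousLinearMap.eq_of_mem_toExposed {l : StrongDual ℝ E} {x y : E}
    (hx : x ∈ l.toExposed P) (hy : y ∈ l.toExposed P) : l x = l y :=
  le_antisymm (hy.2 x hx.1) (hx.2 y hy.1)

theorem vectorSpan_le_ker_of_forall_eq {s : Set E} {l : StrongDual ℝ E}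
    (h : ∀ x ∈ s, ∀ y ∈ s, l x = l y) :
    vectorSpan ℝ s ≤ LinearMap.ker (l : Module.Dual ℝ E) := by
  rw [vectorSpan_def, Submodule.span_le]
  rintro _ ⟨x, hx, y, hy, rfl⟩
  simp [h x hx y hy]

theorem ContinuousLinearMap.vectorSpan_toExposed_le_ker (l : StrongDual ℝ E) (P : Set E) :
    vectorSpan ℝ (l.toExposed P) ≤ LinearMap.ker (l : Module.Dual ℝ E) :=
  vectorSpan_le_ker_of_forall_eq fun _ hx _ hy => eq_of_mem_toExposed hx hy

theorem ContinuousLinearMap.eq_zero_of_affineSpan_eq_top {s : Set E}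
    (hs : affineSpan ℝ s = ⊤) {l : StrongDual ℝ E} (h : ∀ x ∈ s, ∀ y ∈ s, l x = l y) : l = 0 := by
  have hker := vectorSpan_le_ker_of_forall_eq h
  rw [← direction_affineSpan, hs, AffineSubspace.direction_top, top_le_iff] at hker
  ext x
  simpa using hker.ge (Submodule.mem_top (x := x))

theorem convexHull_extremePoints_of_finite {K : Set E} (hK : IsCompact K) (hc : Convex ℝ K)
    (hfin : (K.extremePoints ℝ).Finite) : convexHull ℝ (K.extremePoints ℝ) = K := by
  conv_rhs => rw [← closure_convexHull_extremePoints hK hc]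
  exact (hfin.isClosed_convexHull (𝕜 := ℝ)).closure_eq.symm

theorem IsPolytope.isCompact (hP : IsPolytope P) : IsCompact P := by
  obtain ⟨S, hS, rfl⟩ := hP
  exact hS.isCompact_convexHull (𝕜 := ℝ)

theorem IsPolytope.convex (hP : IsPolytope P) : Convex ℝ P := by
  obtain ⟨S, -, rfl⟩ := hP
  exact convex_convexHull ℝ S

theorem IsPolytope.finite_extremePoints (hP : IsPolytope P) : (P.extremePoints ℝ).Finite := by
  obtain ⟨S, hS, rfl⟩ := hP
  exact hS.subset extremePoints_convexHull_subset

theorem IsPolytope.convexHull_extremePoints (hP : IsPolytope P) :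
    convexHull ℝ (P.extremePoints ℝ) = P :=
  convexHull_extremePoints_of_finite hP.isCompact hP.convex hP.finite_extremePoints

theorem IsPolytope.affineSpan_extremePoints (hP : IsPolytope P) :
    affineSpan ℝ (P.extremePoints ℝ) = affineSpan ℝ P := by
  rw [← affineSpan_convexHull, hP.convexHull_extremePoints]

theorem IsPolytope.convexHull_extremePoints_inter (hP : IsPolytope P) (hF : IsExposed ℝ P F) :
    convexHull ℝ (P.extremePoints ℝ ∩ F) = F := by
  have hFc : IsCompact F := hP.isCompact.of_isClosed_subset
    (hF.isClosed hP.isCompact.isClosed) hF.subset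
  rw [inter_comm, ← hF.isExtreme.extremePoints_eq]
  exact convexHull_extremePoints_of_finite hFc (hF.convex hP.convex)
    (hF.isExtreme.extremePoints_eq ▸ hP.finite_extremePoints.subset inter_subset_right)

theorem IsPolytope.le_of_forall_extremePoints_le (hP : IsPolytope P) {l : StrongDual ℝ E}
    {c : ℝ} (h : ∀ v ∈ P.extremePoints ℝ, l v ≤ c) {x : E} (hx : x ∈ P) : l x ≤ c := by
  rw [← hP.convexHull_extremePoints] at hx
  exact convexHull_min h (convex_halfSpace_le l.isLinear c) hx

theorem IsPolytope.finite_ambientFacets (hP : IsPolytope P) : (ambientFacets P).Finite := by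
  refine (hP.finite_extremePoints.finite_subsets.image (convexHull ℝ)).subset fun G hG => ?_
  exact ⟨_, inter_subset_left, hP.convexHull_extremePoints_inter hG.1.1⟩

theorem IsPolytope.finrank_le_ncard_extremePoints_inter (hP : IsPolytope P) {G : Set E}
    (hG : G ∈ ambientFacets P) : finrank ℝ E ≤ (P.extremePoints ℝ ∩ G).ncard := by
  set T := P.extremePoints ℝ ∩ G
  have hTG : convexHull ℝ T = G := hP.convexHull_extremePoints_inter hG.1.1
  have hT : T.Finite := hP.finite_extremePoints.subset inter_subset_left
  obtain ⟨p, hp⟩ : T.Nonempty := by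
    by_contra! h
    exact hG.1.2.1.ne_empty (by rw [← hTG, h, convexHull_empty])
  have hspan : vectorSpan ℝ T = vectorSpan ℝ G := by
    rw [← direction_affineSpan, ← direction_affineSpan, ← affineSpan_convexHull T, hTG]
  have hle := finrank_vectorSpan_union_le (k := ℝ) {p} (hT.sdiff (t := {p}))
  rw [singleton_union, insert_sdiff_singleton, insert_eq_of_mem hp, hspan, vectorSpan_singleton,
    finrank_bot, Set.ncard_sdiff_singleton_of_mem hp] at hle
  have hdim := hG.2
  rw [polyDim, direction_affineSpan] at hdim
  have hpos := (Set.ncard_pos hT).2 ⟨p, hp⟩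
  omega

theorem IsFaceOf.exists_ne_zero (hF : IsFaceOf P F) :
    ∃ l : StrongDual ℝ E, l ≠ 0 ∧ F = l.toExposed P := by
  obtain ⟨l, hl⟩ := hF.1 hF.2.1
  refine ⟨l, ?_, hl⟩
  rintro rfl
  exact hF.2.2 (by simpa using hl)

theorem isFaceOf_toExposed (hfull : affineSpan ℝ P = ⊤) {l : StrongDual ℝ E} (hl : l ≠ 0)
    (hne : (l.toExposed P).Nonempty) : IsFaceOf P (l.toExposed P) := by
  refine ⟨ContinuousLinearMap.toExposed.isExposed, hne, fun h => hl ?_⟩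
  refine ContinuousLinearMap.eq_zero_of_affineSpan_eq_top hfull fun x hx y hy => ?_
  rw [← h] at hx hy
  exact ContinuousLinearMap.eq_of_mem_toExposed hx hy

theorem IsFaceOf.disjoint_interior (hF : IsFaceOf P F) : Disjoint F (interior P) := by
  obtain ⟨l, hl, rfl⟩ := hF.exists_ne_zero
  refine disjoint_left.2 fun y hyF hy => hl ?_
  have hmax : IsLocalMax l y :=
    Filter.mem_of_superset (mem_interior_iff_mem_nhds.1 hy) hyF.2
  exact hmax.hasFDerivAt_eq_zero l.hasFDerivAt

theorem hasVFA_of_forall_card_le (hfin : (P.extremePoints ℝ).Finite)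
    (h : ∀ A : Finset (Set E), ↑A ⊆ ambientFacets P →
      A.card ≤ (P.extremePoints ℝ \ {v | ∀ G ∈ A, v ∈ G}).ncard) : HasVFA P := by
  classical
  let t : ambientFacets P → Finset E := fun G => hfin.toFinset.filter (· ∉ (G : Set E))
  obtain ⟨g, hg, hgt⟩ := (Finset.all_card_le_biUnion_card_iff_exists_injective t).1 fun A => by
    have hA : ↑(A.map (Function.Embedding.subtype _)) ⊆ ambientFacets P := by
      intro G hG
      obtain ⟨G, -, rfl⟩ := Finset.mem_map.1 hG
      exact G.2
    refine (Finset.card_map _).symm.trans_le ((h _ hA).trans_eq ?_)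
    rw [← Set.ncard_coe_finset]
    congr 1
    ext v
    simp [t]
  have hgt' : ∀ G, g G ∈ P.extremePoints ℝ ∧ g G ∉ (G : Set E) := fun G => by
    simpa [t] using hgt G
  exact Or.inr ⟨fun G => ⟨g G, (hgt' G).1⟩, fun G G' hGG' => hg (congrArg Subtype.val hGG'),
    fun G => (hgt' G).2⟩

variable [FiniteDimensional ℝ E]

theorem exists_dual_le_ker_ne_smul {U : Submodule ℝ E} (hU : finrank ℝ U + 1 < finrank ℝ E)
    (l : StrongDual ℝ E) :
    ∃ η : StrongDual ℝ E, U ≤ LinearMap.ker (η : Module.Dual ℝ E) ∧ ∀ r : ℝ, η ≠ r • l := by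
  have hspan : finrank ℝ (ℝ ∙ (l : Module.Dual ℝ E)) ≤ 1 :=
    (finrank_span_le_card _).trans (by simp)
  obtain ⟨η, hηU, hηl⟩ : ∃ η ∈ U.dualAnnihilator, η ∉ ℝ ∙ (l : Module.Dual ℝ E) := by
    refine SetLike.not_le_iff_exists.1 fun h => ?_
    have h₁ := (Submodule.finrank_mono h).trans hspan
    have h₂ := Subspace.finrank_add_finrank_dualAnnihilator_eq U
    omega
  refine ⟨LinearMap.toContinuousLinearMap η,
    fun u hu => (Submodule.mem_dualAnnihilator η).1 hηU u hu,
    fun r hr => hηl (Submodule.mem_span_singleton.2 ⟨r, ?_⟩)⟩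
  ext x
  simpa using (congrArg (· x) hr).symm

theorem IsFaceOf.polyDim_add_one_le (hF : IsFaceOf P F) : polyDim F + 1 ≤ finrank ℝ E := by
  obtain ⟨l, hl, rfl⟩ := hF.exists_ne_zero
  have hl' : (l : Module.Dual ℝ E) ≠ 0 := fun h => hl (ContinuousLinearMap.coe_injective h)
  rw [← Module.Dual.finrank_ker_add_one_of_ne_zero hl', polyDim, direction_affineSpan]
  exact Nat.add_le_add_right (Submodule.finrank_mono (l.vectorSpan_toExposed_le_ker P)) 1

theorem polyDim_lt_polyDim {F' : Set E} (hFF' : F ⊆ F') {w v : E} (hw : w ∈ F) (hv : v ∈ F')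
    (hvw : v -ᵥ w ∉ vectorSpan ℝ F) : polyDim F < polyDim F' := by
  rw [polyDim, polyDim, direction_affineSpan, direction_affineSpan]
  exact Submodule.finrank_lt_finrank_of_lt <| lt_of_le_of_ne (vectorSpan_mono ℝ hFF')
    fun h => hvw (h ▸ vsub_mem_vectorSpan ℝ hv (hFF' hw))

theorem IsPolytope.exists_face_ssuperset_of_tilt (hP : IsPolytope P)
    (hfull : affineSpan ℝ P = ⊤) {l η : StrongDual ℝ E} (hl : F = l.toExposed P) {w : E}
    (hw : w ∈ F) (hη : vectorSpan ℝ F ≤ LinearMap.ker (η : Module.Dual ℝ E))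
    (hηl : ∀ r : ℝ, η ≠ r • l) (hv : ∃ v ∈ P.extremePoints ℝ, η w < η v) :
    ∃ F', IsFaceOf P F' ∧ F ⊆ F' ∧ polyDim F < polyDim F' := by
  have hconst : ∀ x ∈ F, l x = l w ∧ η x = η w := fun x hx => by
    refine ⟨ContinuousLinearMap.eq_of_mem_toExposed (hl ▸ hx) (hl ▸ hw), ?_⟩
    simpa [sub_eq_zero] using hη (vsub_mem_vectorSpan ℝ hx hw)
  have hlw : ∀ x ∈ P, l x ≤ l w := (hl ▸ hw).2
  have hlt : ∀ v ∈ P.extremePoints ℝ, η w < η v → l v < l w := fun v hv hηv =>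
    (hlw v hv.1).lt_of_ne fun h =>
      hηv.ne' (hconst v (hl ▸ ⟨hv.1, fun y hy => (hlw y hy).trans h.ge⟩)).2
  have hV : ∀ {u}, u ∈ hP.finite_extremePoints.toFinset ↔ u ∈ P.extremePoints ℝ :=
    hP.finite_extremePoints.mem_toFinset
  -- `t` is the largest slope at which `l + t • η` still peaks at `w`; there a new vertex `v` joins.
  obtain ⟨t, ht, hle, v, hvV, hηv, hvt⟩ :=
    hP.finite_extremePoints.toFinset.exists_pos_forall_mul_le_and_eq
      (fun v => l w - l v) (fun v => η v - η w) (fun v hv => sub_nonneg.2 (hlw v (hV.1 hv).1))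
      (fun v hv hηv => sub_pos.2 (hlt v (hV.1 hv) (sub_pos.1 hηv))) (by simpa [hV] using hv)
  set ψ : StrongDual ℝ E := l + t • η
  have hψ : ∀ x ∈ P, ψ x ≤ ψ w := fun x hx => hP.le_of_forall_extremePoints_le (fun u hu => by
    have := hle u (hV.2 hu)
    show l u + t * η u ≤ l w + t * η w
    linarith) hx
  have hFψ : F ⊆ ψ.toExposed P := fun x hx => ⟨hl ▸ hx |>.1, fun y hy => (hψ y hy).trans_eq
    (by simp [ψ, (hconst x hx).1, (hconst x hx).2])⟩
  have hvψ : v ∈ ψ.toExposed P := ⟨(hV.1 hvV).1, fun y hy => (hψ y hy).trans_eq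
    (show l w + t * η w = l v + t * η v by linarith)⟩
  have hψ0 : ψ ≠ 0 := fun h => hηl (-t⁻¹) <| by
    ext x
    have hx : l x + t * η x = 0 := congrArg (· x) h
    simp only [smul_apply, smul_eq_mul]
    field_simp
    linarith
  refine ⟨ψ.toExposed P, isFaceOf_toExposed hfull hψ0 ⟨v, hvψ⟩, hFψ,
    polyDim_lt_polyDim hFψ hw hvψ fun hmem => hηv.ne' ?_⟩
  simpa [sub_eq_zero] using hη hmem

theorem IsFaceOf.exists_ssuperset (hP : IsPolytope P) (hfull : affineSpan ℝ P = ⊤)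
    (hF : IsFaceOf P F) (hdim : polyDim F + 1 < finrank ℝ E) :
    ∃ F', IsFaceOf P F' ∧ F ⊆ F' ∧ polyDim F < polyDim F' := by
  obtain ⟨l, hl⟩ := hF.1 hF.2.1
  obtain ⟨w, hw⟩ := hF.2.1
  rw [polyDim, direction_affineSpan] at hdim
  obtain ⟨η, hη, hηl⟩ := exists_dual_le_ker_ne_smul hdim l
  obtain ⟨v, hv, hne⟩ : ∃ v ∈ P.extremePoints ℝ, η v ≠ η w := by
    by_contra! h
    have hη0 : η = 0 := ContinuousLinearMap.eq_zero_of_affineSpan_eq_top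
      (hP.affineSpan_extremePoints.trans hfull) fun x hx y hy => (h x hx).trans (h y hy).symm
    exact hηl 0 (by rw [hη0, zero_smul])
  rcases hne.lt_or_gt with hlt | hgt
  · refine hP.exists_face_ssuperset_of_tilt hfull hl hw (η := -η) (by simpa using hη)
      (fun r h => hηl (-r) ?_) ⟨v, hv, by simpa using hlt⟩
    rw [← neg_neg η, h]
    exact (neg_smul r l).symm
  · exact hP.exists_face_ssuperset_of_tilt hfull hl hw hη hηl ⟨v, hv, hgt⟩

theorem IsFaceOf.exists_facet_superset {F : Set E} (hP : IsPolytope P)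
    (hfull : affineSpan ℝ P = ⊤) (hF : IsFaceOf P F) : ∃ G ∈ ambientFacets P, F ⊆ G := by
  by_cases hdim : polyDim F + 1 = finrank ℝ E
  · exact ⟨F, ⟨hF, by omega⟩, subset_rfl⟩
  obtain ⟨F', hF', hFF', hlt⟩ :=
    hF.exists_ssuperset hP hfull (by have := hF.polyDim_add_one_le; omega)
  obtain ⟨G, hG, hF'G⟩ := hF'.exists_facet_superset hP hfull
  exact ⟨G, hG, hFF'.trans hF'G⟩
termination_by finrank ℝ E - polyDim F
decreasing_by have := hF'.polyDim_add_one_le; omega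

theorem IsPolytope.exists_facet_lt_of_notMem (hP : IsPolytope P) (hfull : affineSpan ℝ P = ⊤)
    {x : E} (hx : x ∉ P) :
    ∃ G ∈ ambientFacets P, ∀ l : StrongDual ℝ E, G = l.toExposed P → ∀ b ∈ G, l b < l x := by
  obtain ⟨y, hy⟩ := hP.convex.interior_nonempty_iff_affineSpan_eq_top.2 hfull
  obtain ⟨t, ⟨ht0, ht1⟩, hb⟩ := exists_lineMap_mem_frontier (interior_subset hy) hx
  set b := AffineMap.lineMap y x t
  have hbP : b ∈ P := hP.isCompact.isClosed.frontier_subset hb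
  have ht1' : t ≠ 1 := by rintro rfl; exact hx (by simpa [b] using hbP)
  obtain ⟨f, hf, hfb⟩ := geometric_hahn_banach_of_nonempty_interior_point hP.convex hb.2 ⟨y, hy⟩
  obtain ⟨G, hG, hfG⟩ :=
    (isFaceOf_toExposed hfull hf ⟨b, hbP, hfb⟩).exists_facet_superset hP hfull
  have hbG : b ∈ G := hfG ⟨hbP, hfb⟩
  refine ⟨G, hG, fun l hl b' hb' => ?_⟩
  have hyb : l y < l b := by
    have hyG : y ∉ G := disjoint_right.1 hG.1.disjoint_interior hy
    rw [hl] at hyG hbG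
    obtain ⟨z, hz, hyz⟩ := not_forall₂.1 fun h => hyG ⟨interior_subset hy, h⟩
    exact (not_le.1 hyz).trans_le (hbG.2 z hz)
  have hlb : l b = (1 - t) * l y + t * l x := by
    simp [b, AffineMap.lineMap_apply_module]
  rw [ContinuousLinearMap.eq_of_mem_toExposed (hl ▸ hb') (hl ▸ hbG)]
  nlinarith [lt_of_le_of_ne ht1 ht1']

theorem IsPolytope.eq_zero_of_forall_mem_vectorSpan (hP : IsPolytope P)
    (hfull : affineSpan ℝ P = ⊤) {w z : E} (hw : w ∈ P.extremePoints ℝ)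
    (hz : ∀ G ∈ ambientFacets P, w ∈ G → z ∈ vectorSpan ℝ G) : z = 0 := by
  choose! ℓ hℓ using fun G (hG : G ∈ ambientFacets P) =>
    (hG.1.1 hG.1.2.1 : ∃ l : StrongDual ℝ E, G = l.toExposed P)
  -- Facets through `w` stay tight along `z`; the others are strict at `w`, hence near `w`.
  have hnear : ∀ G ∈ ambientFacets P, ∀ᶠ s in 𝓝 (0 : ℝ), ∃ b ∈ G, ℓ G (w + s • z) ≤ ℓ G b := by
    intro G hG
    by_cases hwG : w ∈ G
    · have hz0 : ℓ G z = 0 := (ℓ G).vectorSpan_toExposed_le_ker P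
        (vectorSpan_mono ℝ (hℓ G hG).subset (hz G hG hwG))
      exact Filter.Eventually.of_forall fun s => ⟨w, hwG, by simp [hz0]⟩
    · obtain ⟨b, hb⟩ := hG.1.2.1
      have hlt : ℓ G w < ℓ G b := by
        rw [hℓ G hG] at hwG hb
        obtain ⟨y, hy, hwy⟩ := not_forall₂.1 fun h => hwG ⟨hw.1, h⟩
        exact (not_le.1 hwy).trans_le (hb.2 y hy)
      have hcont : Continuous fun s : ℝ => ℓ G (w + s • z) := by fun_prop
      filter_upwards [hcont.continuousAt.eventually_lt continuousAt_const (by simpa using hlt)]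
        with s hs using ⟨b, hb, hs.le⟩
  refine eq_zero_of_eventually_add_smul_mem hw ?_
  filter_upwards [hP.finite_ambientFacets.eventually_all.2 hnear] with s hs
  by_contra hout
  obtain ⟨G, hG, hlt⟩ := hP.exists_facet_lt_of_notMem hfull hout
  obtain ⟨b, hb, hle⟩ := hs G hG
  exact (hlt (ℓ G) (hℓ G hG) b hb).not_ge hle

theorem IsPolytope.card_le_ncard_extremePoints (hP : IsPolytope P)
    (hsimple : ∀ v ∈ P.extremePoints ℝ, {F ∈ ambientFacets P | v ∈ F}.ncard ≤ finrank ℝ E)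
    (A : Finset (Set E)) (hA : ↑A ⊆ ambientFacets P) : A.card ≤ (P.extremePoints ℝ).ncard := by
  classical
  obtain rfl | ⟨G, hG⟩ := A.eq_empty_or_nonempty
  · simp
  have hpos : 0 < finrank ℝ E := by have := (hA hG).1.polyDim_add_one_le; omega
  have hV := hP.finite_extremePoints
  have hcount := Finset.card_mul_le_card_mul (fun (G : Set E) (v : E) => v ∈ G)
    (s := A) (t := hV.toFinset) (m := finrank ℝ E) (n := finrank ℝ E)
    (fun G hG => by
      rw [← Set.ncard_coe_finset, Finset.coe_bipartiteAbove]
      simpa [Set.sep_mem_eq, inter_comm] using hP.finrank_le_ncard_extremePoints_inter (hA hG))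
    (fun v hv => by
      refine (Set.ncard_coe_finset _ ▸ Set.ncard_le_ncard (fun F hF => ?_)
        (hP.finite_ambientFacets.sep _)).trans (hsimple v (hV.mem_toFinset.1 hv))
      rw [Finset.coe_bipartiteBelow] at hF
      exact ⟨hA hF.1, hF.2⟩)
  rw [Set.ncard_eq_toFinset_card _ hV]
  exact Nat.le_of_mul_le_mul_right hcount hpos

theorem IsPolytope.finrank_inf_vectorSpan_add_card_le (hP : IsPolytope P)
    (hfull : affineSpan ℝ P = ⊤)
    (hsimple : ∀ v ∈ P.extremePoints ℝ, {F ∈ ambientFacets P | v ∈ F}.ncard ≤ finrank ℝ E)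
    {w : E} (hw : w ∈ P.extremePoints ℝ) (A : Finset (Set E)) (hA : ↑A ⊆ ambientFacets P)
    (hwA : ∀ G ∈ A, w ∈ G) :
    finrank ℝ (A.inf fun G => vectorSpan ℝ G : Submodule ℝ E) + A.card ≤ finrank ℝ E := by
  classical
  have hfac := hP.finite_ambientFacets
  set Φ := hfac.toFinset.filter (w ∈ ·)
  have hmemΦ : ∀ {G}, G ∈ Φ ↔ G ∈ ambientFacets P ∧ w ∈ G := by simp [Φ]
  have hAΦ : A ⊆ Φ := fun G hG => hmemΦ.2 ⟨hA hG, hwA G hG⟩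
  have hΦ : Φ.card ≤ finrank ℝ E := by
    rw [← Set.ncard_coe_finset]
    convert hsimple w hw using 2
    ext F
    exact hmemΦ
  have hbot : Φ.inf (fun G => vectorSpan ℝ G) = ⊥ := (Submodule.eq_bot_iff _).2 fun z hz =>
    hP.eq_zero_of_forall_mem_vectorSpan hfull hw fun G hG hwG =>
      Submodule.mem_finsetInf.1 hz G (hmemΦ.2 ⟨hG, hwG⟩)
  have hcodim := Submodule.finrank_le_finrank_inf_add_card (A.inf fun G => vectorSpan ℝ G)
    (Φ \ A) (fun G => vectorSpan ℝ G) fun G hG => by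
      have hdim := (hmemΦ.1 (Finset.mem_sdiff.1 hG).1).1.2
      rw [polyDim, direction_affineSpan] at hdim
      omega
  rw [← Finset.inf_union, Finset.union_sdiff_of_subset hAΦ, hbot, finrank_bot,
    Finset.card_sdiff_of_subset hAΦ] at hcodim
  have := Finset.card_le_card hAΦ
  omega

theorem IsPolytope.card_le_ncard_extremePoints_sdiff (hP : IsPolytope P)
    (hfull : affineSpan ℝ P = ⊤)
    (hsimple : ∀ v ∈ P.extremePoints ℝ, {F ∈ ambientFacets P | v ∈ F}.ncard ≤ finrank ℝ E)
    (A : Finset (Set E)) (hA : ↑A ⊆ ambientFacets P) :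
    A.card ≤ (P.extremePoints ℝ \ {v | ∀ G ∈ A, v ∈ G}).ncard := by
  rw [← sdiff_inter_self_eq_sdiff]
  set W := {v | ∀ G ∈ A, v ∈ G} ∩ P.extremePoints ℝ
  obtain hW | ⟨w, hwA, hwV⟩ := W.eq_empty_or_nonempty
  · rw [hW, sdiff_empty]
    exact hP.card_le_ncard_extremePoints hsimple A hA
  have hunion := finrank_vectorSpan_union_le (k := ℝ) W (hP.finite_extremePoints.sdiff (t := W))
  rw [union_sdiff_cancel inter_subset_right, ← direction_affineSpan, hP.affineSpan_extremePoints,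
    hfull, AffineSubspace.direction_top, finrank_top] at hunion
  have hWA : finrank ℝ (vectorSpan ℝ W) ≤
      finrank ℝ (A.inf fun G => vectorSpan ℝ G : Submodule ℝ E) :=
    Submodule.finrank_mono (Finset.le_inf fun G hG => vectorSpan_mono ℝ fun v hv => hv.1 G hG)
  have := hP.finrank_inf_vectorSpan_add_card_le hfull hsimple hwV A hA hwA
  omega

end NormedSpace

/-- Every simple full-dimensional polytope (every vertex is contained in
exactly `d` facets of `P`) has a vertex-facet assignment. -/
theorem vfa_of_simple {d : ℕ} (P : Set (Fin d → ℝ))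
    (hP : IsPolytope P) (hfull : affineSpan ℝ P = ⊤)
    (hsimple : ∀ v ∈ P.extremePoints ℝ, {F ∈ ambientFacets P | v ∈ F}.ncard = d) :
    HasVFA P :=
  hasVFA_of_forall_card_le hP.finite_extremePoints <|
    hP.card_le_ncard_extremePoints_sdiff hfull fun v hv => by
      rw [Module.finrank_fin_fun]
      exact (hsimple v hv).le
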